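/- arXiv:math/0602497 — 6 statements merged into one kernel-verified Lean document; each statement's English description precedes it below -/
import Mathlib

section
/- Let B be a double groupoid with side groupoids V (vertical) and H (horizontal) over base P, and let E be its core groupoid, consisting of boxes whose top and right edges are identities, with source s(E) = bl(E), target e(E) = br(E), identity P ↦ Θ_P, and composition E ∘ M = the composite box {(id l(M), M) over (E, id b(M))}. Then the formula E ⇀ A = {(id l(A), A) over (E, id b(A))}, defined when br(E) = bl(A), is an action of the groupoid E on the fiber bundle γ : B → P, γ(B) = lb(B). -/
/-- A groupoid over a base `Pt`, given concretely by a set of arrows with source and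
target maps, identities, a (total, but only meaningful on composable pairs)
composition written in diagrammatic order (`comp g h` is "`g` then `h`",
defined when `e g = s h`), and inverses. -/
structure PreGroupoid (Pt : Type) (Arr : Type) where
  s : Arr → Pt
  e : Arr → Pt
  id : Pt → Arr
  comp : Arr → Arr → Arr
  inv : Arr → Arr
  s_id : ∀ p, s (id p) = p
  e_id : ∀ p, e (id p) = p
  s_comp : ∀ g h, e g = s h → s (comp g h) = s g
  e_comp : ∀ g h, e g = s h → e (comp g h) = e h
  id_comp : ∀ g, comp (id (s g)) g = g
  comp_id : ∀ g, comp g (id (e g)) = g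
  assoc : ∀ g h k, e g = s h → e h = s k → comp (comp g h) k = comp g (comp h k)
  s_inv : ∀ g, s (inv g) = e g
  e_inv : ∀ g, e (inv g) = s g
  comp_inv : ∀ g, comp g (inv g) = id (s g)
  inv_comp : ∀ g, comp (inv g) g = id (e g)

/-- An action of a groupoid `G` over `Pt` on a fiber bundle `p : E → Pt`:
`act g x` is meaningful when `G.e g = p x`, lands in the fiber over `G.s g`,
is compatible with composition (`(gh) ▷ x = g ▷ (h ▷ x)`) and identities act
trivially. -/
structure GroupoidAction {Pt Arr E : Type} (G : PreGroupoid Pt Arr) (p : E → Pt) where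
  act : Arr → E → E
  p_act : ∀ g x, G.e g = p x → p (act g x) = G.s g
  act_id : ∀ x, act (G.id (p x)) x = x
  act_comp : ∀ g h x, G.e g = G.s h → G.e h = p x →
    act (G.comp g h) x = act g (act h x)

/-! ### Double groupoids.
A double groupoid with base `Pt`, boxes `Bx`, horizontal edges `Hh` and vertical
edges `Vv`: `hor` and `ver` are the edge groupoids over `Pt` (for a horizontal
edge `x`, `hor.s x` / `hor.e x` are its left / right endpoints; for a vertical
edge `g`, `ver.s g` / `ver.e g` are its top / bottom endpoints); `bh` is the
horizontal composition groupoid of boxes over `Vv` (source = left edge, target =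
right edge) and `bv` the vertical composition groupoid of boxes over `Hh`
(source = top edge, target = bottom edge), subject to compatibility of the edge
maps with the compositions and identities, and the interchange law. -/
structure DoubleGroupoid (Pt Bx Hh Vv : Type) where
  hor : PreGroupoid Pt Hh
  ver : PreGroupoid Pt Vv
  bh : PreGroupoid Vv Bx
  bv : PreGroupoid Hh Bx
  match_tl : ∀ A, hor.s (bv.s A) = ver.s (bh.s A)
  match_tr : ∀ A, hor.e (bv.s A) = ver.s (bh.e A)
  match_bl : ∀ A, hor.s (bv.e A) = ver.e (bh.s A)
  match_br : ∀ A, hor.e (bv.e A) = ver.e (bh.e A)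
  t_hcomp : ∀ A C, bh.e A = bh.s C → bv.s (bh.comp A C) = hor.comp (bv.s A) (bv.s C)
  b_hcomp : ∀ A C, bh.e A = bh.s C → bv.e (bh.comp A C) = hor.comp (bv.e A) (bv.e C)
  l_vcomp : ∀ A C, bv.e A = bv.s C → bh.s (bv.comp A C) = ver.comp (bh.s A) (bh.s C)
  r_vcomp : ∀ A C, bv.e A = bv.s C → bh.e (bv.comp A C) = ver.comp (bh.e A) (bh.e C)
  t_idh : ∀ g, bv.s (bh.id g) = hor.id (ver.s g)
  b_idh : ∀ g, bv.e (bh.id g) = hor.id (ver.e g)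
  l_idv : ∀ x, bh.s (bv.id x) = ver.id (hor.s x)
  r_idv : ∀ x, bh.e (bv.id x) = ver.id (hor.e x)
  idh_vcomp : ∀ g g', ver.e g = ver.s g' →
    bv.comp (bh.id g) (bh.id g') = bh.id (ver.comp g g')
  idv_hcomp : ∀ x y, hor.e x = hor.s y →
    bh.comp (bv.id x) (bv.id y) = bv.id (hor.comp x y)
  theta_eq : ∀ p, bh.id (ver.id p) = bv.id (hor.id p)
  interchange : ∀ A C A' C', bh.e A = bh.s C → bh.e A' = bh.s C' →
    bv.e A = bv.s A' → bv.e C = bv.s C' →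
    bv.comp (bh.comp A C) (bh.comp A' C') = bh.comp (bv.comp A A') (bv.comp C C')

namespace DoubleGroupoid

variable {Pt Bx Hh Vv : Type} (D : DoubleGroupoid Pt Bx Hh Vv)

/-- Top edge of a box. -/
def top (A : Bx) : Hh := D.bv.s A
/-- Bottom edge of a box. -/
def bot (A : Bx) : Hh := D.bv.e A
/-- Left edge of a box. -/
def lft (A : Bx) : Vv := D.bh.s A
/-- Right edge of a box. -/
def rgt (A : Bx) : Vv := D.bh.e A
/-- Top-left vertex of a box. -/
def tlv (A : Bx) : Pt := D.ver.s (D.bh.s A)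
/-- Bottom-left vertex of a box. -/
def blv (A : Bx) : Pt := D.ver.e (D.bh.s A)
/-- Bottom-right vertex of a box. -/
def brv (A : Bx) : Pt := D.ver.e (D.bh.e A)
/-- The doubly degenerate box `Θ_p` at a point. -/
def theta (p : Pt) : Bx := D.bh.id (D.ver.id p)
/-- The core groupoid: boxes whose top and right edges are identities.  (Its source
and target maps are the bottom-left and bottom-right vertices.) -/
def core : Set Bx :=
  {E | (∃ p, D.bv.s E = D.hor.id p) ∧ (∃ q, D.bh.e E = D.ver.id q)}
/-- The action of the core groupoid on boxes:
`E ⇀ A = {(id l(A), A) over (E, id b(A))}`; since `id l(A) ⬝ A = A`, this is the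
vertical composite of `A` over `E ⬝ id b(A)`.  It is meaningful when
`br(E) = bl(A)`.  For `E, M` in the core, `coreAct E M` is also the core
composition `E ∘ M`. -/
def coreAct (E A : Bx) : Bx :=
  D.bv.comp A (D.bh.comp E (D.bv.id (D.bv.e A)))
/-- The associated bundle `K`: boxes all of whose edges are identities. -/
def kBundle : Set Bx :=
  {K | (∃ p, D.bv.s K = D.hor.id p) ∧ (∃ p, D.bv.e K = D.hor.id p) ∧
       (∃ p, D.bh.s K = D.ver.id p) ∧ (∃ p, D.bh.e K = D.ver.id p)}

end DoubleGroupoid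

namespace DoubleGroupoid

variable {Pt Bx Hh Vv : Type} (D : DoubleGroupoid Pt Bx Hh Vv)

/-- For a core box, the right edge is the identity at the bottom-right vertex. -/
lemma core_rgt {E : Bx} (hE : E ∈ D.core) : D.bh.e E = D.ver.id (D.brv E) := by
  obtain ⟨_, q, hr⟩ := hE
  have hq : D.brv E = q := by rw [brv, hr, D.ver.e_id]
  rw [hq, hr]

/-- For a core box, the top edge is the identity at the bottom-right vertex. -/
lemma core_top {E : Bx} (hE : E ∈ D.core) : D.bv.s E = D.hor.id (D.brv E) := by
  have hr := D.core_rgt hE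
  obtain ⟨⟨p, ht⟩, _⟩ := hE
  have h := D.match_tr E
  rw [ht, hr, D.hor.e_id, D.ver.s_id] at h
  rw [ht, h]

/-- Horizontal composability of `E` with the vertical identity on `bot A`. -/
lemma coreAct_hcomposable {E A : Bx} (h : D.bh.e E = D.ver.id (D.blv A)) :
    D.bh.e E = D.bh.s (D.bv.id (D.bv.e A)) := by
  rw [D.l_idv, D.match_bl]
  exact h

/-- The top edge of the auxiliary horizontal composite is `bot A`. -/
lemma coreAct_vcomposable {E A : Bx} (h : D.bh.e E = D.ver.id (D.blv A))
    (ht : D.bv.s E = D.hor.id (D.blv A)) :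
    D.bv.s (D.bh.comp E (D.bv.id (D.bv.e A))) = D.bv.e A := by
  rw [D.t_hcomp _ _ (D.coreAct_hcomposable h), ht, D.bv.s_id]
  have : D.blv A = D.hor.s (D.bv.e A) := (D.match_bl A).symm
  rw [this, D.hor.id_comp]

/-- Left edge of `coreAct E A`. -/
lemma coreAct_lft {E A : Bx} (h : D.bh.e E = D.ver.id (D.blv A))
    (ht : D.bv.s E = D.hor.id (D.blv A)) :
    D.bh.s (D.coreAct E A) = D.ver.comp (D.bh.s A) (D.bh.s E) := by
  rw [coreAct, D.l_vcomp _ _ (D.coreAct_vcomposable h ht).symm,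
    D.bh.s_comp _ _ (D.coreAct_hcomposable h)]

/-- Bottom edge of `coreAct E A`. -/
lemma coreAct_bot {E A : Bx} (h : D.bh.e E = D.ver.id (D.blv A))
    (ht : D.bv.s E = D.hor.id (D.blv A)) :
    D.bv.e (D.coreAct E A) = D.hor.comp (D.bv.e E) (D.bv.e A) := by
  rw [coreAct, D.bv.e_comp _ _ (D.coreAct_vcomposable h ht).symm,
    D.b_hcomp _ _ (D.coreAct_hcomposable h), D.bv.e_id]

/-- The top-left vertex of a core box equals its bottom-right vertex. -/
lemma core_tlv {E : Bx} (hE : E ∈ D.core) : D.ver.s (D.bh.s E) = D.brv E := by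
  have h := D.match_tl E
  rw [D.core_top hE, D.hor.s_id] at h
  exact h.symm

/-- Part 1: the action lands in the fiber over the source of the core arrow. -/
lemma blv_coreAct {E A : Bx} (hE : E ∈ D.core) (hc : D.brv E = D.blv A) :
    D.blv (D.coreAct E A) = D.blv E := by
  have h : D.bh.e E = D.ver.id (D.blv A) := by rw [D.core_rgt hE, hc]
  have ht : D.bv.s E = D.hor.id (D.blv A) := by rw [D.core_top hE, hc]
  have hv : D.ver.e (D.bh.s A) = D.ver.s (D.bh.s E) := by
    rw [D.core_tlv hE, hc]; rfl
  rw [blv, D.coreAct_lft h ht, D.ver.e_comp _ _ hv]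
  rfl

/-- Part 2: the degenerate boxes act trivially. -/
lemma coreAct_theta (A : Bx) : D.coreAct (D.theta (D.blv A)) A = A := by
  have hs : D.bh.s (D.bv.id (D.bv.e A)) = D.ver.id (D.blv A) := by
    rw [D.l_idv, D.match_bl]; rfl
  rw [coreAct, theta, ← hs, D.bh.id_comp]
  exact D.bv.comp_id A

/-- Part 3: compatibility of the action with the core composition. -/
lemma coreAct_coreAct {E M A : Bx} (hE : E ∈ D.core) (hM : M ∈ D.core)
    (hMA : D.brv M = D.blv A) (hEM : D.brv E = D.blv M) :
    D.coreAct E (D.coreAct M A) = D.coreAct (D.coreAct E M) A := by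
  have hMr : D.bh.e M = D.ver.id (D.blv A) := by rw [D.core_rgt hM, hMA]
  have hMt : D.bv.s M = D.hor.id (D.blv A) := by rw [D.core_top hM, hMA]
  have hEr : D.bh.e E = D.ver.id (D.blv M) := by rw [D.core_rgt hE, hEM]
  have hEt : D.bv.s E = D.hor.id (D.blv M) := by rw [D.core_top hE, hEM]
  have hbb : D.hor.e (D.bv.e M) = D.hor.s (D.bv.e A) := by
    rw [D.match_br, D.match_bl]; exact hMA
  have c1 : D.bh.e M = D.bh.s (D.bv.id (D.bv.e A)) := D.coreAct_hcomposable hMr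
  have cE : D.bh.e E = D.bh.s (D.bv.id (D.bv.e M)) := D.coreAct_hcomposable hEr
  have cMid : D.bh.e (D.bv.id (D.bv.e M)) = D.bh.s (D.bv.id (D.bv.e A)) := by
    rw [D.r_idv, D.l_idv, hbb]
  have c2 : D.bh.e (D.bh.comp E (D.bv.id (D.bv.e M))) = D.bh.s (D.bv.id (D.bv.e A)) := by
    rw [D.bh.e_comp _ _ cE]; exact cMid
  have c3 : D.bv.e M = D.bv.s (D.bh.comp E (D.bv.id (D.bv.e M))) :=
    (D.coreAct_vcomposable hEr hEt).symm
  have c4 : D.bv.e (D.bv.id (D.bv.e A)) = D.bv.s (D.bv.id (D.bv.e A)) := by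
    rw [D.bv.e_id, D.bv.s_id]
  have hidid : D.bv.comp (D.bv.id (D.bv.e A)) (D.bv.id (D.bv.e A))
      = D.bv.id (D.bv.e A) := by
    have h := D.bv.comp_id (D.bv.id (D.bv.e A)); rwa [D.bv.e_id] at h
  have hB : D.bv.e (D.coreAct M A) = D.hor.comp (D.bv.e M) (D.bv.e A) :=
    D.coreAct_bot hMr hMt
  have key : D.bh.comp E (D.bv.id (D.bv.e (D.coreAct M A)))
      = D.bh.comp (D.bh.comp E (D.bv.id (D.bv.e M))) (D.bv.id (D.bv.e A)) := by
    rw [hB, ← D.idv_hcomp _ _ hbb, ← D.bh.assoc _ _ _ cE cMid]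
  have hA : D.bv.e A = D.bv.s (D.bh.comp M (D.bv.id (D.bv.e A))) :=
    (D.coreAct_vcomposable hMr hMt).symm
  have hXM : D.bv.e (D.bh.comp M (D.bv.id (D.bv.e A)))
      = D.bv.s (D.bh.comp (D.bh.comp E (D.bv.id (D.bv.e M))) (D.bv.id (D.bv.e A))) := by
    rw [D.b_hcomp _ _ c1, D.bv.e_id, D.t_hcomp _ _ c2, D.bv.s_id,
      D.coreAct_vcomposable hEr hEt]
  calc D.coreAct E (D.coreAct M A)
      = D.bv.comp (D.bv.comp A (D.bh.comp M (D.bv.id (D.bv.e A))))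
          (D.bh.comp (D.bh.comp E (D.bv.id (D.bv.e M))) (D.bv.id (D.bv.e A))) := by
        rw [coreAct, key]; rfl
    _ = D.bv.comp A (D.bv.comp (D.bh.comp M (D.bv.id (D.bv.e A)))
          (D.bh.comp (D.bh.comp E (D.bv.id (D.bv.e M))) (D.bv.id (D.bv.e A)))) :=
        D.bv.assoc _ _ _ hA hXM
    _ = D.bv.comp A (D.bh.comp (D.bv.comp M (D.bh.comp E (D.bv.id (D.bv.e M))))
          (D.bv.comp (D.bv.id (D.bv.e A)) (D.bv.id (D.bv.e A)))) := by
        rw [D.interchange _ _ _ _ c1 c2 c3 c4]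
    _ = D.bv.comp A (D.bh.comp (D.bv.comp M (D.bh.comp E (D.bv.id (D.bv.e M))))
          (D.bv.id (D.bv.e A))) := by rw [hidid]
    _ = D.coreAct (D.coreAct E M) A := rfl

end DoubleGroupoid

open DoubleGroupoid in
/-- The formula `E ⇀ A = {(id l(A), A) over (E, id b(A))}`, defined when
`br(E) = bl(A)`, is an action of the core groupoid `E` (with source `bl`,
target `br`, identities `Θ_p`, and composition `E ∘ M = coreAct E M`) on the
fiber bundle `γ : B → Pt`, `γ(A) = lb(A)`: the result lies in the fiber over the
source `bl(E)`, the identities `Θ_p` act trivially, and the action is compatible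
with the core composition. -/
theorem core_action_is_action {Pt Bx Hh Vv : Type} (D : DoubleGroupoid Pt Bx Hh Vv) :
    (∀ E A, E ∈ D.core → D.brv E = D.blv A → D.blv (D.coreAct E A) = D.blv E) ∧
    (∀ A : Bx, D.coreAct (D.theta (D.blv A)) A = A) ∧
    (∀ E M A, E ∈ D.core → M ∈ D.core → D.brv M = D.blv A → D.brv E = D.blv M →
      D.coreAct E (D.coreAct M A) = D.coreAct (D.coreAct E M) A) :=
  ⟨fun _ _ hE hc => D.blv_coreAct hE hc, D.coreAct_theta,
   fun _ _ _ hE hM hMA hEM => D.coreAct_coreAct hE hM hMA hEM⟩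
end

section
/- Let B be a double groupoid with core groupoid E acting on the bundle γ : B → P by E ⇀ A. For every box B ∈ B, the orbit of B under this action equals the set Ur(B) of all boxes in B having the same top and right edges as B, and the stabilizer E^B is trivial. Equivalently, for every C ∈ Ur(B) there is a unique E ∈ E with E ⇀ B = C. -/
theorem PreGroupoid.inv_unique {Pt Arr : Type} (G : PreGroupoid Pt Arr)
    (g h : Arr) (hc : G.e g = G.s h) (hgh : G.comp g h = G.id (G.s g)) :
    h = G.inv g := by
  calc h = G.comp (G.id (G.s h)) h := (G.id_comp h).symm
    _ = G.comp (G.comp (G.inv g) g) h := by rw [← hc, ← G.inv_comp]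
    _ = G.comp (G.inv g) (G.comp g h) := G.assoc _ _ _ (G.e_inv g) hc
    _ = G.comp (G.inv g) (G.id (G.s g)) := by rw [hgh]
    _ = G.inv g := by rw [← G.e_inv g]; exact G.comp_id _

namespace DoubleGroupoid

variable {Pt Bx Hh Vv : Type} (D : DoubleGroupoid Pt Bx Hh Vv)

theorem coreAct_edges (E A : Bx) (hE : E ∈ D.core) (hb : D.brv E = D.blv A) :
    D.bh.e E = D.ver.id (D.hor.s (D.bv.e A)) ∧
    D.bh.e E = D.bh.s (D.bv.id (D.bv.e A)) ∧
    D.bv.s (D.bh.comp E (D.bv.id (D.bv.e A))) = D.bv.e A ∧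
    D.bh.e (D.bh.comp E (D.bv.id (D.bv.e A))) = D.ver.id (D.ver.e (D.bh.e A)) := by
  obtain ⟨⟨p, hp⟩, ⟨q, hq⟩⟩ := hE
  have hblv : D.blv A = D.hor.s (D.bv.e A) := (D.match_bl A).symm
  have hq' : q = D.blv A := by
    have hq2 : D.brv E = q := by rw [DoubleGroupoid.brv, hq, D.ver.e_id]
    rw [← hq2, hb]
  have h1 : D.bh.e E = D.ver.id (D.hor.s (D.bv.e A)) := by rw [hq, hq', hblv]
  have h2 : D.bh.e E = D.bh.s (D.bv.id (D.bv.e A)) := by rw [h1, D.l_idv]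
  have hpq : p = q := by
    have h := D.match_tr E
    rw [hp, hq, D.hor.e_id, D.ver.s_id] at h
    exact h
  have h3 : D.bv.s (D.bh.comp E (D.bv.id (D.bv.e A))) = D.bv.e A := by
    rw [D.t_hcomp _ _ h2, hp, D.bv.s_id, hpq, hq', hblv]
    exact D.hor.id_comp (D.bv.e A)
  have h4 : D.bh.e (D.bh.comp E (D.bv.id (D.bv.e A))) = D.ver.id (D.ver.e (D.bh.e A)) := by
    rw [D.bh.e_comp _ _ h2, D.r_idv, D.match_br]
  exact ⟨h1, h2, h3, h4⟩

theorem rgt_vinv (A : Bx) : D.bh.e (D.bv.inv A) = D.ver.inv (D.bh.e A) := by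
  apply D.ver.inv_unique
  · rw [← D.match_tr, D.bv.s_inv, D.match_br]
  · have hc : D.bv.e A = D.bv.s (D.bv.inv A) := (D.bv.s_inv A).symm
    rw [← D.r_vcomp A (D.bv.inv A) hc, D.bv.comp_inv, D.r_idv, D.match_tr]

theorem coreAct_cancel (A E1 E2 : Bx) (h1 : E1 ∈ D.core) (hb1 : D.brv E1 = D.blv A)
    (h2 : E2 ∈ D.core) (hb2 : D.brv E2 = D.blv A)
    (heq : D.coreAct E1 A = D.coreAct E2 A) : E1 = E2 := by
  have key : ∀ E, E ∈ D.core → D.brv E = D.blv A →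
      D.bv.comp (D.bv.inv A) (D.coreAct E A) = D.bh.comp E (D.bv.id (D.bv.e A)) := by
    intro E hE hb
    obtain ⟨hx1, hx2, hx3, hx4⟩ := D.coreAct_edges E A hE hb
    show D.bv.comp (D.bv.inv A) (D.bv.comp A _) = _
    rw [← D.bv.assoc _ _ _ (D.bv.e_inv A) hx3.symm, D.bv.inv_comp]
    have hid := D.bv.id_comp (D.bh.comp E (D.bv.id (D.bv.e A)))
    rw [hx3] at hid
    exact hid
  have hXeq : D.bh.comp E1 (D.bv.id (D.bv.e A)) = D.bh.comp E2 (D.bv.id (D.bv.e A)) := by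
    rw [← key E1 h1 hb1, ← key E2 h2 hb2, heq]
  have step : ∀ E, E ∈ D.core → D.brv E = D.blv A →
      D.bh.comp (D.bh.comp E (D.bv.id (D.bv.e A))) (D.bv.id (D.hor.inv (D.bv.e A))) = E := by
    intro E hE hb
    obtain ⟨hx1, hx2, hx3, hx4⟩ := D.coreAct_edges E A hE hb
    have cZY : D.bh.e (D.bv.id (D.bv.e A)) = D.bh.s (D.bv.id (D.hor.inv (D.bv.e A))) := by
      rw [D.r_idv, D.l_idv, D.hor.s_inv]
    rw [D.bh.assoc _ _ _ hx2 cZY, D.idv_hcomp _ _ (D.hor.s_inv _).symm, D.hor.comp_inv,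
        ← D.theta_eq, ← hx1]
    exact D.bh.comp_id _
  calc E1 = _ := (step E1 h1 hb1).symm
    _ = D.bh.comp (D.bh.comp E2 (D.bv.id (D.bv.e A))) (D.bv.id (D.hor.inv (D.bv.e A))) := by
        rw [hXeq]
    _ = E2 := step E2 h2 hb2

end DoubleGroupoid

/-- For every box `A` of a double groupoid, the orbit of `A` under the core action
`E ⇀ A` equals the set `Ur(A)` of boxes having the same top and right edges as
`A`, and the stabilizer of `A` in the core groupoid is trivial: equivalently, for
every `C ∈ Ur(A)` there is a unique core box `E` (with `br(E) = bl(A)`) such that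
`E ⇀ A = C`. -/
theorem core_action_orbit_ur_and_free {Pt Bx Hh Vv : Type}
    (D : DoubleGroupoid Pt Bx Hh Vv) :
    (∀ E A, E ∈ D.core → D.brv E = D.blv A →
      D.top (D.coreAct E A) = D.top A ∧ D.rgt (D.coreAct E A) = D.rgt A) ∧
    (∀ A C : Bx, D.top C = D.top A → D.rgt C = D.rgt A →
      ∃! E, E ∈ D.core ∧ D.brv E = D.blv A ∧ D.coreAct E A = C) := by
  constructor
  · intro E A hE hb
    obtain ⟨hx1, hx2, hx3, hx4⟩ := D.coreAct_edges E A hE hb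
    constructor
    · exact D.bv.s_comp A _ hx3.symm
    · show D.bh.e (D.bv.comp A _) = D.bh.e A
      rw [D.r_vcomp _ _ hx3.symm, hx4]
      exact D.ver.comp_id _
  · intro A C hT hR
    have hT' : D.bv.s C = D.bv.s A := hT
    have hR' : D.bh.e C = D.bh.e A := hR
    have cN : D.bv.e (D.bv.inv A) = D.bv.s C := by rw [D.bv.e_inv, hT']
    have hNs : D.bv.s (D.bv.comp (D.bv.inv A) C) = D.bv.e A := by
      rw [D.bv.s_comp _ _ cN, D.bv.s_inv]
    have hNr : D.bh.e (D.bv.comp (D.bv.inv A) C) = D.ver.id (D.hor.e (D.bv.e A)) := by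
      rw [D.r_vcomp _ _ cN, D.rgt_vinv, hR', D.ver.inv_comp, ← D.match_br]
    have cE : D.bh.e (D.bv.comp (D.bv.inv A) C)
        = D.bh.s (D.bv.id (D.hor.inv (D.bv.e A))) := by
      rw [hNr, D.l_idv, D.hor.s_inv]
    have hEt : D.bv.s (D.bh.comp (D.bv.comp (D.bv.inv A) C) (D.bv.id (D.hor.inv (D.bv.e A))))
        = D.hor.id (D.hor.s (D.bv.e A)) := by
      rw [D.t_hcomp _ _ cE, hNs, D.bv.s_id, D.hor.comp_inv]
    have hEr : D.bh.e (D.bh.comp (D.bv.comp (D.bv.inv A) C) (D.bv.id (D.hor.inv (D.bv.e A))))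
        = D.ver.id (D.hor.s (D.bv.e A)) := by
      rw [D.bh.e_comp _ _ cE, D.r_idv, D.hor.e_inv]
    have hEcore : D.bh.comp (D.bv.comp (D.bv.inv A) C) (D.bv.id (D.hor.inv (D.bv.e A)))
        ∈ D.core := ⟨⟨_, hEt⟩, ⟨_, hEr⟩⟩
    have hEbrv : D.brv (D.bh.comp (D.bv.comp (D.bv.inv A) C) (D.bv.id (D.hor.inv (D.bv.e A))))
        = D.blv A := by
      rw [DoubleGroupoid.brv, hEr, D.ver.e_id]
      exact D.match_bl A
    have cYZ : D.bh.e (D.bv.id (D.hor.inv (D.bv.e A))) = D.bh.s (D.bv.id (D.bv.e A)) := by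
      rw [D.r_idv, D.l_idv, D.hor.e_inv]
    have hX : D.bh.comp
        (D.bh.comp (D.bv.comp (D.bv.inv A) C) (D.bv.id (D.hor.inv (D.bv.e A))))
        (D.bv.id (D.bv.e A)) = D.bv.comp (D.bv.inv A) C := by
      rw [D.bh.assoc _ _ _ cE cYZ, D.idv_hcomp _ _ (D.hor.e_inv _), D.hor.inv_comp,
          ← D.theta_eq, ← hNr]
      exact D.bh.comp_id _
    have hact : D.coreAct
        (D.bh.comp (D.bv.comp (D.bv.inv A) C) (D.bv.id (D.hor.inv (D.bv.e A)))) A = C := by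
      show D.bv.comp A _ = C
      rw [hX, ← D.bv.assoc A (D.bv.inv A) C (D.bv.s_inv A).symm cN, D.bv.comp_inv, ← hT']
      exact D.bv.id_comp C
    refine ⟨_, ⟨hEcore, hEbrv, hact⟩, ?_⟩
    rintro y ⟨hy, hyb, hya⟩
    exact D.coreAct_cancel A y _ hy hyb hEcore hEbrv (hya.trans hact.symm)
end

section
/- A double groupoid B is vacant (every pair (x,g) ∈ H ×_{r,t} V of matching top and right edges has a unique filling box) if and only if its core groupoid E is trivial, i.e., E consists only of the degenerate boxes Θ_P, P ∈ P. -/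
namespace PreGroupoid
variable {Pt Arr : Type} (G : PreGroupoid Pt Arr)

theorem eq_inv_of_comp {a b : Arr} (h : G.e a = G.s b)
    (hc : G.comp a b = G.id (G.s a)) : b = G.inv a :=
  calc b = G.comp (G.id (G.s b)) b := (G.id_comp b).symm
    _ = G.comp (G.comp (G.inv a) a) b := by rw [← h, G.inv_comp]
    _ = G.comp (G.inv a) (G.comp a b) := G.assoc _ _ _ (by rw [G.e_inv]) h
    _ = G.comp (G.inv a) (G.id (G.s a)) := by rw [hc]
    _ = G.inv a := by rw [← G.e_inv a]; exact G.comp_id _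

theorem inv_inv (a : Arr) : G.inv (G.inv a) = a :=
  (G.eq_inv_of_comp (G.e_inv a) (by rw [G.inv_comp, G.s_inv])).symm

theorem inv_cancel {a b : Arr} (h : G.e a = G.s b) :
    G.comp (G.inv a) (G.comp a b) = b := by
  rw [← G.assoc _ _ _ (by rw [G.e_inv]) h, G.inv_comp, h, G.id_comp]

end PreGroupoid

theorem DoubleGroupoid.bv_inv_idh {Pt Bx Hh Vv : Type} (D : DoubleGroupoid Pt Bx Hh Vv)
    (g : Vv) : D.bv.inv (D.bh.id g) = D.bh.id (D.ver.inv g) := by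
  refine (D.bv.eq_inv_of_comp ?_ ?_).symm
  · rw [D.b_idh, D.t_idh, D.ver.s_inv]
  · rw [D.idh_vcomp _ _ (D.ver.s_inv g).symm, D.ver.comp_inv, D.theta_eq, D.t_idh]

/-- A finite double groupoid `B` satisfying the filling condition is vacant (every
matching pair `(x, g)` of a top and right edge with `r(x) = t(g)` has a *unique*
filling box) if and only if its core groupoid is trivial, i.e. the core consists
only of the degenerate boxes `Θ_p`, `p ∈ Pt`. -/
theorem vacant_iff_core_trivial {Pt Bx Hh Vv : Type} [Finite Bx]
    (D : DoubleGroupoid Pt Bx Hh Vv)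
    (hfill : ∀ (x : Hh) (g : Vv), D.hor.e x = D.ver.s g →
      ∃ A : Bx, D.top A = x ∧ D.rgt A = g) :
    (∀ (x : Hh) (g : Vv), D.hor.e x = D.ver.s g →
      ∃! A : Bx, D.top A = x ∧ D.rgt A = g) ↔
    (∀ E ∈ D.core, ∃ p : Pt, E = D.theta p) := by
  constructor
  · -- vacancy → trivial core
    rintro huniq E ⟨⟨p, hp⟩, ⟨q, hq⟩⟩
    have hpq : p = q := by
      have h := D.match_tr E
      rw [hp, hq, D.hor.e_id, D.ver.s_id] at h
      exact h
    subst hpq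
    refine ⟨p, ?_⟩
    have hm : D.hor.e (D.hor.id p) = D.ver.s (D.ver.id p) := by
      rw [D.hor.e_id, D.ver.s_id]
    obtain ⟨A, -, hA⟩ := huniq (D.hor.id p) (D.ver.id p) hm
    have h1 : E = A := hA E ⟨hp, hq⟩
    have h2 : D.theta p = A := hA (D.theta p) ⟨by
      show D.bv.s (D.bh.id (D.ver.id p)) = _
      rw [D.t_idh, D.ver.s_id], by
      show D.bh.e (D.bh.id (D.ver.id p)) = _
      exact D.bh.e_id _⟩
    rw [h1, h2]
  · -- trivial core → vacancy
    intro hcore x g hxg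
    obtain ⟨A, hA⟩ := hfill x g hxg
    refine ⟨A, hA, ?_⟩
    rintro A' ⟨hA't, hA'r⟩
    obtain ⟨hAt, hAr⟩ := hA
    have hAt' : D.bv.s A = x := hAt
    have hAr' : D.bh.e A = g := hAr
    have hA't' : D.bv.s A' = x := hA't
    have hA'r' : D.bh.e A' = g := hA'r
    set lA := D.bh.s A with hlA
    -- top of the horizontal inverse of A is the horizontal inverse of x
    have hTopInv : D.bv.s (D.bh.inv A) = D.hor.inv x := by
      refine D.hor.eq_inv_of_comp ?_ ?_
      · rw [D.match_tl, D.bh.s_inv, ← D.match_tr, hAt']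
      · rw [← hAt', ← D.t_hcomp A (D.bh.inv A) (D.bh.s_inv A).symm,
          D.bh.comp_inv, D.t_idh, D.match_tl]
    -- composability facts
    have hc1 : D.bh.e A' = D.bh.s (D.bh.inv A) := by
      rw [D.bh.s_inv, hA'r', ← hAr']
    set G := D.bh.comp A' (D.bh.inv A) with hG
    set K := D.bh.id (D.ver.inv lA) with hK
    have hsG : D.bv.s G = D.hor.id (D.hor.s x) := by
      rw [hG, D.t_hcomp _ _ hc1, hTopInv, hA't', D.hor.comp_inv]
    have heG : D.bh.e G = lA := by rw [hG, D.bh.e_comp _ _ hc1, D.bh.e_inv]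
    have hKe : D.bv.e K = D.bv.s G := by
      rw [hK, D.b_idh, D.ver.e_inv, hsG, hlA, ← D.match_tl, hAt']
    set E := D.bv.comp K G with hE
    have hsE : D.bv.s E = D.hor.id (D.ver.e lA) := by
      rw [hE, D.bv.s_comp _ _ hKe, hK, D.t_idh, D.ver.s_inv]
    have hEcore : E ∈ D.core := by
      refine ⟨⟨D.ver.e lA, hsE⟩, ⟨D.ver.e lA, ?_⟩⟩
      rw [hE, D.r_vcomp _ _ hKe, hK, D.bh.e_id, heG, D.ver.inv_comp]
    obtain ⟨p, hEp⟩ := hcore E hEcore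
    -- recover G
    have hGE : G = D.bv.comp (D.bv.inv K) E := (D.bv.inv_cancel hKe).symm
    have hinvK : D.bv.inv K = D.bh.id lA := by
      rw [hK, D.bv_inv_idh, D.ver.inv_inv]
    have hpval : D.hor.id p = D.hor.id (D.ver.e lA) := by
      have : D.bv.s E = D.hor.id p := by
        rw [hEp]; show D.bv.s (D.bh.id (D.ver.id p)) = _
        rw [D.t_idh, D.ver.s_id]
      rw [← this, hsE]
    have hGid : G = D.bh.id lA := by
      rw [hGE, hinvK, hEp, DoubleGroupoid.theta, D.theta_eq, hpval,
        ← D.b_idh lA, D.bv.comp_id]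
    -- conclude A' = A
    have hcomp : D.bh.comp G A = A' := by
      rw [hG, D.bh.assoc _ _ _ hc1 (D.bh.e_inv A), D.bh.inv_comp, hAr', ← hA'r',
        D.bh.comp_id]
    rw [← hcomp, hGid, hlA, D.bh.id_comp]
end

section
/- Let B be a finite double groupoid and θ(Q) = ⌝(id_V Q, id_H Q) the number of boxes whose top and right edges are both the identity at Q. If P ∼ Q in the equivalence relation on P induced by the core groupoid E (i.e., E(P,Q) ≠ ∅), then θ(P) = θ(Q). -/
/-- Let `B` be a finite double groupoid and `θ(Q) = ⌝(id_V Q, id_H Q)` the number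
of boxes whose top and right edges are both identities at `Q`.  If `P ∼ Q` in the
equivalence relation on `Pt` induced by the core groupoid (there is a core box
from `P` to `Q`), then `θ(P) = θ(Q)`. -/
theorem theta_constant_on_core_components {Pt Bx Hh Vv : Type} [Finite Bx]
    (D : DoubleGroupoid Pt Bx Hh Vv) (p q : Pt)
    (hpq : ∃ E ∈ D.core, D.blv E = p ∧ D.brv E = q) :
    Nat.card {A : Bx // D.top A = D.hor.id p ∧ D.rgt A = D.ver.id p} =
      Nat.card {A : Bx // D.top A = D.hor.id q ∧ D.rgt A = D.ver.id q} := by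

  obtain ⟨E, ⟨⟨p0, htop⟩, ⟨q0, hrgt⟩⟩, hblv, hbrv⟩ := hpq
  simp only [DoubleGroupoid.blv, DoubleGroupoid.brv] at hblv hbrv
  have hq0 : q0 = q := by rw [← hbrv, hrgt, D.ver.e_id]
  rw [hq0] at hrgt
  have hp0 : p0 = q := by
    have h := D.match_tr E
    rwa [htop, hrgt, D.hor.e_id, D.ver.s_id] at h
  rw [hp0] at htop
  set f := D.bv.e E with hf
  have hfs : D.hor.s f = p := by
    have h := D.match_bl E; rw [hblv] at h; exact h
  have hfe : D.hor.e f = q := by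
    have h := D.match_br E; rwa [hrgt, D.ver.e_id] at h
  -- right edge of the vertical inverse of E is the identity at q
  have hre : D.bh.e (D.bv.inv E) = D.ver.id q := by
    have hc : D.bv.e E = D.bv.s (D.bv.inv E) := (D.bv.s_inv E).symm
    have h1 : D.bh.e (D.bv.comp E (D.bv.inv E)) =
        D.ver.comp (D.bh.e E) (D.bh.e (D.bv.inv E)) := D.r_vcomp _ _ hc
    rw [D.bv.comp_inv, htop, D.r_idv, D.hor.e_id, hrgt] at h1
    have hs : D.ver.s (D.bh.e (D.bv.inv E)) = q := by
      have h := D.match_tr (D.bv.inv E)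
      rw [D.bv.s_inv, ← hf, hfe] at h; exact h.symm
    have h2 : D.ver.comp (D.ver.id q) (D.bh.e (D.bv.inv E)) = D.bh.e (D.bv.inv E) := by
      conv_lhs => rw [← hs]
      exact D.ver.id_comp _
    rw [h2] at h1; exact h1.symm
  have idid : D.ver.comp (D.ver.id q) (D.ver.id q) = D.ver.id q := by
    have h := D.ver.id_comp (D.ver.id q); rwa [D.ver.s_id] at h
  -- the forward map
  have phiMem : ∀ A : Bx, D.bv.s A = D.hor.id p → D.bh.e A = D.ver.id p →
      D.bv.s (D.bv.comp E (D.bh.comp A (D.bv.id f))) = D.hor.id q ∧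
      D.bh.e (D.bv.comp E (D.bh.comp A (D.bv.id f))) = D.ver.id q ∧
      D.bv.e E = D.bv.s (D.bh.comp A (D.bv.id f)) ∧
      D.bh.e A = D.bh.s (D.bv.id f) := by
    intro A hA1 hA2
    have hc1 : D.bh.e A = D.bh.s (D.bv.id f) := by rw [D.l_idv, hfs, hA2]
    have hsY : D.bv.s (D.bh.comp A (D.bv.id f)) = f := by
      rw [D.t_hcomp _ _ hc1, hA1, D.bv.s_id, ← hfs, D.hor.id_comp]
    have hc2 : D.bv.e E = D.bv.s (D.bh.comp A (D.bv.id f)) := by rw [hsY]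
    refine ⟨?_, ?_, hc2, hc1⟩
    · rw [D.bv.s_comp _ _ hc2, htop]
    · rw [D.r_vcomp _ _ hc2, hrgt, D.bh.e_comp _ _ hc1, D.r_idv, hfe]
      exact idid
  -- the backward map
  have psiMem : ∀ B : Bx, D.bv.s B = D.hor.id q → D.bh.e B = D.ver.id q →
      D.bv.s (D.bh.comp (D.bv.comp (D.bv.inv E) B) (D.bv.id (D.hor.inv f))) = D.hor.id p ∧
      D.bh.e (D.bh.comp (D.bv.comp (D.bv.inv E) B) (D.bv.id (D.hor.inv f))) = D.ver.id p ∧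
      D.bv.e (D.bv.inv E) = D.bv.s B ∧
      D.bh.e (D.bv.comp (D.bv.inv E) B) = D.bh.s (D.bv.id (D.hor.inv f)) := by
    intro B hB1 hB2
    have hc1 : D.bv.e (D.bv.inv E) = D.bv.s B := by rw [D.bv.e_inv, htop, hB1]
    have hc2 : D.bh.e (D.bv.comp (D.bv.inv E) B) = D.bh.s (D.bv.id (D.hor.inv f)) := by
      rw [D.r_vcomp _ _ hc1, hre, hB2, D.l_idv, D.hor.s_inv, hfe]
      exact idid
    refine ⟨?_, ?_, hc1, hc2⟩
    · rw [D.t_hcomp _ _ hc2, D.bv.s_comp _ _ hc1, D.bv.s_inv, D.bv.s_id, ← hf,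
        D.hor.comp_inv, hfs]
    · rw [D.bh.e_comp _ _ hc2, D.r_idv, D.hor.e_inv, hfs]
  refine Nat.card_congr ⟨
    fun A => ⟨D.bv.comp E (D.bh.comp A.1 (D.bv.id f)),
      (phiMem A.1 A.2.1 A.2.2).1, (phiMem A.1 A.2.1 A.2.2).2.1⟩,
    fun B => ⟨D.bh.comp (D.bv.comp (D.bv.inv E) B.1) (D.bv.id (D.hor.inv f)),
      (psiMem B.1 B.2.1 B.2.2).1, (psiMem B.1 B.2.1 B.2.2).2.1⟩, ?_, ?_⟩
  · rintro ⟨A, hA1, hA2⟩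
    have hA1 : D.bv.s A = D.hor.id p := hA1
    have hA2 : D.bh.e A = D.ver.id p := hA2
    obtain ⟨hP1, hP2, hc2, hc1⟩ := phiMem A hA1 hA2
    apply Subtype.ext
    show D.bh.comp (D.bv.comp (D.bv.inv E)
        (D.bv.comp E (D.bh.comp A (D.bv.id f)))) (D.bv.id (D.hor.inv f)) = A
    have step1 : D.bv.comp (D.bv.inv E) (D.bv.comp E (D.bh.comp A (D.bv.id f)))
        = D.bh.comp A (D.bv.id f) := by
      rw [← D.bv.assoc _ _ _ (by rw [D.bv.e_inv]) hc2, D.bv.inv_comp]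
      have hsY : D.bv.s (D.bh.comp A (D.bv.id f)) = D.bv.e E := hc2.symm
      conv_lhs => rw [← hsY]
      exact D.bv.id_comp _
    rw [step1]
    have hcf : D.hor.e f = D.hor.s (D.hor.inv f) := by rw [D.hor.s_inv]
    have hcc : D.bh.e (D.bv.id f) = D.bh.s (D.bv.id (D.hor.inv f)) := by
      rw [D.r_idv, D.l_idv, D.hor.s_inv]
    rw [D.bh.assoc _ _ _ hc1 hcc, D.idv_hcomp _ _ hcf, D.hor.comp_inv, hfs,
      ← D.theta_eq]
    conv_lhs => rw [← hA2]
    exact D.bh.comp_id A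
  · rintro ⟨B, hB1, hB2⟩
    have hB1 : D.bv.s B = D.hor.id q := hB1
    have hB2 : D.bh.e B = D.ver.id q := hB2
    obtain ⟨hP1, hP2, hc1, hc2⟩ := psiMem B hB1 hB2
    apply Subtype.ext
    show D.bv.comp E (D.bh.comp
        (D.bh.comp (D.bv.comp (D.bv.inv E) B) (D.bv.id (D.hor.inv f)))
        (D.bv.id f)) = B
    have hcc : D.bh.e (D.bv.id (D.hor.inv f)) = D.bh.s (D.bv.id f) := by
      rw [D.r_idv, D.l_idv, D.hor.e_inv]
    have step1 : D.bh.comp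
        (D.bh.comp (D.bv.comp (D.bv.inv E) B) (D.bv.id (D.hor.inv f))) (D.bv.id f)
        = D.bv.comp (D.bv.inv E) B := by
      rw [D.bh.assoc _ _ _ hc2 hcc, D.idv_hcomp _ _ (by rw [D.hor.e_inv]),
        D.hor.inv_comp, hfe, ← D.theta_eq]
      have hZe : D.bh.e (D.bv.comp (D.bv.inv E) B) = D.ver.id q := by
        rw [D.r_vcomp _ _ hc1, hre, hB2]
        exact idid
      conv_lhs => rw [← hZe]
      exact D.bh.comp_id _
    rw [step1, ← D.bv.assoc _ _ _ (by rw [D.bv.s_inv]) hc1, D.bv.comp_inv, htop,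
      ← hB1]
    exact D.bv.id_comp B
end

section
/- Let B be a finite double groupoid and X, Y, Z boxes with X | Y (horizontally composable) and X over Z (vertically composable). Then the upper-right corner function satisfies ⌝(XY) = ⌝(X) and ⌝(X over Z) = ⌝(Z), and the lower-left corner function satisfies ⌞(XY) = ⌞(Y) and ⌞(X over Z) = ⌞(X). -/
/-- The upper-right corner function `⌝(A) = |Ur(A)|` (number of boxes with the same
top and right edges as `A`). -/
noncomputable def urCorner {Pt Bx Hh Vv : Type} (D : DoubleGroupoid Pt Bx Hh Vv) (A : Bx) : ℕ :=
  Nat.card {C : Bx // D.top C = D.top A ∧ D.rgt C = D.rgt A}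

/-- The lower-left corner function `⌞(A)` (number of boxes with the same bottom and
left edges as `A`). -/
noncomputable def llCorner {Pt Bx Hh Vv : Type} (D : DoubleGroupoid Pt Bx Hh Vv) (A : Bx) : ℕ :=
  Nat.card {C : Bx // D.bot C = D.bot A ∧ D.lft C = D.lft A}


lemma PreGroupoid.cancel_right {Pt Arr : Type} (G : PreGroupoid Pt Arr) {C Y : Arr}
    (h : G.e C = G.s Y) : G.comp (G.comp C Y) (G.inv Y) = C := by
  rw [G.assoc C Y (G.inv Y) h (G.s_inv Y).symm, G.comp_inv, ← h, G.comp_id]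

lemma PreGroupoid.cancel_right' {Pt Arr : Type} (G : PreGroupoid Pt Arr) {C Y : Arr}
    (h : G.e C = G.e Y) : G.comp (G.comp C (G.inv Y)) Y = C := by
  rw [G.assoc C (G.inv Y) Y (h.trans (G.s_inv Y).symm) (G.e_inv Y), G.inv_comp, ← h, G.comp_id]

lemma PreGroupoid.cancel_left {Pt Arr : Type} (G : PreGroupoid Pt Arr) {X C : Arr}
    (h : G.e X = G.s C) : G.comp (G.inv X) (G.comp X C) = C := by
  rw [← G.assoc (G.inv X) X C (G.e_inv X) h, G.inv_comp, h, G.id_comp]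

lemma PreGroupoid.cancel_left' {Pt Arr : Type} (G : PreGroupoid Pt Arr) {X C : Arr}
    (h : G.s X = G.s C) : G.comp X (G.comp (G.inv X) C) = C := by
  rw [← G.assoc X (G.inv X) C (G.s_inv X).symm ((G.e_inv X).trans h), G.comp_inv, h, G.id_comp]

lemma card_congr_aux {Bx : Type} (P P' : Bx → Prop) (m m' : Bx → Bx)
    (h1 : ∀ C, P C → P' (m C)) (h2 : ∀ C, P' C → P (m' C))
    (h3 : ∀ C, P C → m' (m C) = C) (h4 : ∀ C, P' C → m (m' C) = C) :
    Nat.card {C // P' C} = Nat.card {C // P C} :=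
  (Nat.card_congr ⟨fun c => ⟨m c.1, h1 _ c.2⟩, fun c => ⟨m' c.1, h2 _ c.2⟩,
    fun c => Subtype.ext (h3 _ c.2), fun c => Subtype.ext (h4 _ c.2)⟩).symm

/-- Let `B` be a finite double groupoid and `X, Y, Z` boxes with `X | Y`
(horizontally composable, `r(X) = l(Y)`) and `X` over `Z` (vertically composable,
`b(X) = t(Z)`).  Then `⌝(XY) = ⌝(X)`, `⌝(X over Z) = ⌝(Z)`, `⌞(XY) = ⌞(Y)` and
`⌞(X over Z) = ⌞(X)`. -/
theorem corner_of_compositions {Pt Bx Hh Vv : Type} [Finite Bx]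
    (D : DoubleGroupoid Pt Bx Hh Vv) (X Y Z : Bx)
    (hXY : D.rgt X = D.lft Y) (hXZ : D.bot X = D.top Z) :
    urCorner D (D.bh.comp X Y) = urCorner D X ∧
    urCorner D (D.bv.comp X Z) = urCorner D Z ∧
    llCorner D (D.bh.comp X Y) = llCorner D Y ∧
    llCorner D (D.bv.comp X Z) = llCorner D X := by
  have hXY' : D.bh.e X = D.bh.s Y := hXY
  have hXZ' : D.bv.e X = D.bv.s Z := hXZ
  unfold urCorner llCorner DoubleGroupoid.top DoubleGroupoid.bot DoubleGroupoid.lft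
    DoubleGroupoid.rgt
  refine ⟨?_, ?_, ?_, ?_⟩
  · -- ⌝(XY) = ⌝(X): C ↦ C ⬝ Y
    refine card_congr_aux _ _ (fun C => D.bh.comp C Y) (fun C => D.bh.comp C (D.bh.inv Y))
      ?_ ?_ ?_ ?_
    · rintro C ⟨ht, hr⟩
      have hc : D.bh.e C = D.bh.s Y := hr.trans hXY'
      exact ⟨by rw [D.t_hcomp C Y hc, D.t_hcomp X Y hXY', ht],
        by rw [D.bh.e_comp C Y hc, D.bh.e_comp X Y hXY']⟩
    · rintro C ⟨ht, hr⟩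
      have hr' : D.bh.e C = D.bh.e Y := hr.trans (D.bh.e_comp X Y hXY')
      have hc : D.bh.e C = D.bh.s (D.bh.inv Y) := hr'.trans (D.bh.s_inv Y).symm
      have hXc : D.bh.e (D.bh.comp X Y) = D.bh.s (D.bh.inv Y) :=
        (D.bh.e_comp X Y hXY').trans (D.bh.s_inv Y).symm
      constructor
      · rw [D.t_hcomp _ _ hc, ht, ← D.t_hcomp _ _ hXc, D.bh.cancel_right hXY']
      · rw [D.bh.e_comp _ _ hc, D.bh.e_inv, ← hXY']
    · rintro C ⟨ht, hr⟩
      exact D.bh.cancel_right (hr.trans hXY')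
    · rintro C ⟨ht, hr⟩
      exact D.bh.cancel_right' (hr.trans (D.bh.e_comp X Y hXY'))
  · -- ⌝(X/Z) = ⌝(Z): C ↦ X / C
    refine card_congr_aux _ _ (fun C => D.bv.comp X C) (fun C => D.bv.comp (D.bv.inv X) C)
      ?_ ?_ ?_ ?_
    · rintro C ⟨ht, hr⟩
      have hc : D.bv.e X = D.bv.s C := hXZ'.trans ht.symm
      exact ⟨by rw [D.bv.s_comp X C hc, D.bv.s_comp X Z hXZ'],
        by rw [D.r_vcomp X C hc, D.r_vcomp X Z hXZ', hr]⟩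
    · rintro C ⟨ht, hr⟩
      have hc : D.bv.e (D.bv.inv X) = D.bv.s C :=
        (D.bv.e_inv X).trans ((D.bv.s_comp X Z hXZ').symm.trans ht.symm)
      have hXc : D.bv.e (D.bv.inv X) = D.bv.s (D.bv.comp X Z) :=
        (D.bv.e_inv X).trans (D.bv.s_comp X Z hXZ').symm
      constructor
      · rw [D.bv.s_comp _ _ hc, D.bv.s_inv, hXZ']
      · rw [D.r_vcomp _ _ hc, hr, ← D.r_vcomp _ _ hXc, D.bv.cancel_left hXZ']
    · rintro C ⟨ht, hr⟩
      exact D.bv.cancel_left (hXZ'.trans ht.symm)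
    · rintro C ⟨ht, hr⟩
      exact D.bv.cancel_left' ((D.bv.s_comp X Z hXZ').symm.trans ht.symm)
  · -- ⌞(XY) = ⌞(Y): C ↦ X ⬝ C
    refine card_congr_aux _ _ (fun C => D.bh.comp X C) (fun C => D.bh.comp (D.bh.inv X) C)
      ?_ ?_ ?_ ?_
    · rintro C ⟨hb, hl⟩
      have hc : D.bh.e X = D.bh.s C := hXY'.trans hl.symm
      exact ⟨by rw [D.b_hcomp X C hc, D.b_hcomp X Y hXY', hb],
        by rw [D.bh.s_comp X C hc, D.bh.s_comp X Y hXY']⟩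
    · rintro C ⟨hb, hl⟩
      have hc : D.bh.e (D.bh.inv X) = D.bh.s C :=
        (D.bh.e_inv X).trans ((D.bh.s_comp X Y hXY').symm.trans hl.symm)
      have hXc : D.bh.e (D.bh.inv X) = D.bh.s (D.bh.comp X Y) :=
        (D.bh.e_inv X).trans (D.bh.s_comp X Y hXY').symm
      constructor
      · rw [D.b_hcomp _ _ hc, hb, ← D.b_hcomp _ _ hXc, D.bh.cancel_left hXY']
      · rw [D.bh.s_comp _ _ hc, D.bh.s_inv, hXY']
    · rintro C ⟨hb, hl⟩
      exact D.bh.cancel_left (hXY'.trans hl.symm)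
    · rintro C ⟨hb, hl⟩
      exact D.bh.cancel_left' ((D.bh.s_comp X Y hXY').symm.trans hl.symm)
  · -- ⌞(X/Z) = ⌞(X): C ↦ C / Z
    refine card_congr_aux _ _ (fun C => D.bv.comp C Z) (fun C => D.bv.comp C (D.bv.inv Z))
      ?_ ?_ ?_ ?_
    · rintro C ⟨hb, hl⟩
      have hc : D.bv.e C = D.bv.s Z := hb.trans hXZ'
      exact ⟨by rw [D.bv.e_comp C Z hc, D.bv.e_comp X Z hXZ'],
        by rw [D.l_vcomp C Z hc, D.l_vcomp X Z hXZ', hl]⟩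
    · rintro C ⟨hb, hl⟩
      have hc : D.bv.e C = D.bv.s (D.bv.inv Z) :=
        (hb.trans (D.bv.e_comp X Z hXZ')).trans (D.bv.s_inv Z).symm
      have hXc : D.bv.e (D.bv.comp X Z) = D.bv.s (D.bv.inv Z) :=
        (D.bv.e_comp X Z hXZ').trans (D.bv.s_inv Z).symm
      constructor
      · rw [D.bv.e_comp _ _ hc, D.bv.e_inv, ← hXZ']
      · rw [D.l_vcomp _ _ hc, hl, ← D.l_vcomp _ _ hXc, D.bv.cancel_right hXZ']
    · rintro C ⟨hb, hl⟩
      exact D.bv.cancel_right (hb.trans hXZ')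
    · rintro C ⟨hb, hl⟩
      exact D.bv.cancel_right' (hb.trans (D.bv.e_comp X Z hXZ'))
end

section
/- Let B be a slim double groupoid satisfying the filling condition, D(B) = (V * H)/J its diagonal groupoid (quotient of the free product by the normal subgroup bundle J generated by the relations [A] = x g y⁻¹ h⁻¹ for boxes A), and i : H → D(B), j : V → D(B) the canonical maps. Then D(B) = j(V)i(H): every arrow of D(B) can be written as j(g)i(x) with g ∈ V, x ∈ H, b(g) = l(x). -/
/-! ### The free product of two groupoids over a common base, via reduced words.
Letters are arrows of the disjoint union quiver `V ⊔ H`; a path is either a base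
point (`Sum.inl p`) or a nonempty composable list of letters (`Sum.inr l`).  The
reduction operations (removing identity letters, collapsing a single identity
letter to its base point, and multiplying adjacent letters lying in the same
factor groupoid) generate an equivalence relation whose classes are the elements
of the free product `V * H`. -/

/-- A letter: an arrow of `V` (`inl`) or of `H` (`inr`). -/
abbrev Letter (Av Ah : Type) := Av ⊕ Ah

variable {Pt Av Ah : Type}

def lsrc (GV : PreGroupoid Pt Av) (GH : PreGroupoid Pt Ah) : Letter Av Ah → Pt
  | .inl g => GV.s g
  | .inr x => GH.s x

def ltgt (GV : PreGroupoid Pt Av) (GH : PreGroupoid Pt Ah) : Letter Av Ah → Pt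
  | .inl g => GV.e g
  | .inr x => GH.e x

/-- The letter is an identity arrow of its factor groupoid. -/
def lIsId (GV : PreGroupoid Pt Av) (GH : PreGroupoid Pt Ah) : Letter Av Ah → Prop
  | .inl g => ∃ p, g = GV.id p
  | .inr x => ∃ p, x = GH.id p

/-- Which factor groupoid the letter belongs to. -/
def lFac : Letter Av Ah → Bool
  | .inl _ => true
  | .inr _ => false

/-- The inverse of a letter, taken in its factor groupoid. -/
def linv (GV : PreGroupoid Pt Av) (GH : PreGroupoid Pt Ah) : Letter Av Ah → Letter Av Ah
  | .inl g => .inl (GV.inv g)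
  | .inr x => .inr (GH.inv x)

/-- One-step reduction of paths in the quiver `V ⊔ H`. -/
inductive Red (GV : PreGroupoid Pt Av) (GH : PreGroupoid Pt Ah) :
    (Pt ⊕ List (Letter Av Ah)) → (Pt ⊕ List (Letter Av Ah)) → Prop
  | remove_id (l₁ l₂ : List (Letter Av Ah)) (u : Letter Av Ah) :
      lIsId GV GH u → l₁ ++ l₂ ≠ [] →
      Red GV GH (.inr (l₁ ++ u :: l₂)) (.inr (l₁ ++ l₂))
  | single_id (u : Letter Av Ah) (p : Pt) :
      lIsId GV GH u → lsrc GV GH u = p →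
      Red GV GH (.inr [u]) (.inl p)
  | merge_v (l₁ l₂ : List (Letter Av Ah)) (g g' : Av) :
      GV.e g = GV.s g' →
      Red GV GH (.inr (l₁ ++ .inl g :: .inl g' :: l₂))
        (.inr (l₁ ++ .inl (GV.comp g g') :: l₂))
  | merge_h (l₁ l₂ : List (Letter Av Ah)) (x x' : Ah) :
      GH.e x = GH.s x' →
      Red GV GH (.inr (l₁ ++ .inr x :: .inr x' :: l₂))
        (.inr (l₁ ++ .inr (GH.comp x x') :: l₂))

/-- Consecutive letters alternate between the two factor groupoids. -/
def Alternating : List (Letter Av Ah) → Prop :=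
  List.Chain' (fun a b => lFac a ≠ lFac b)

/-- Consecutive letters are composable (target of one = source of the next). -/
def Composable (GV : PreGroupoid Pt Av) (GH : PreGroupoid Pt Ah) :
    List (Letter Av Ah) → Prop :=
  List.Chain' (fun a b => ltgt GV GH a = lsrc GV GH b)

/-- Reduced path: a base point, or a nonempty composable word with no identity
letters in which consecutive letters lie in different factors. -/
def ReducedW (GV : PreGroupoid Pt Av) (GH : PreGroupoid Pt Ah) :
    (Pt ⊕ List (Letter Av Ah)) → Prop
  | .inl _ => True
  | .inr l => l ≠ [] ∧ Composable GV GH l ∧ (∀ u ∈ l, ¬ lIsId GV GH u) ∧ Alternating l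

/-- Length of a path (a base point has length 0). -/
def wlen : (Pt ⊕ List (Letter Av Ah)) → ℕ
  | .inl _ => 0
  | .inr l => l.length

variable {Pt Bx Hh Vv : Type}

/-- The bracket word `[A] = x g y⁻¹ h⁻¹` associated to a box `A` (top `x`, right
`g`, bottom `y`, left `h`), a loop of the free product `V * H` based at the
top-left vertex of `A`. -/
def brktWord (D : DoubleGroupoid Pt Bx Hh Vv) (A : Bx) : List (Letter Vv Hh) :=
  [.inr (D.bv.s A), .inl (D.bh.e A),
   .inr (D.hor.inv (D.bv.e A)), .inl (D.ver.inv (D.bh.s A))]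

/-- One-step relation generating equality in the diagonal groupoid
`D(B) = (V * H) / J`: either a reduction of the free product, or insertion of a
bracket relation `[A]` at an occurrence of its base point (the top-left vertex of
`A`). -/
inductive RedJ (D : DoubleGroupoid Pt Bx Hh Vv) :
    (Pt ⊕ List (Letter Vv Hh)) → (Pt ⊕ List (Letter Vv Hh)) → Prop
  | red (w w' : Pt ⊕ List (Letter Vv Hh)) :
      Red D.ver D.hor w w' → RedJ D w w'
  | insert (l₁ l₂ : List (Letter Vv Hh)) (A : Bx) :
      l₁ ++ l₂ ≠ [] →
      (∀ z ∈ l₁.getLast?, ltgt D.ver D.hor z = D.ver.s (D.bh.s A)) →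
      (∀ z ∈ l₂.head?, lsrc D.ver D.hor z = D.ver.s (D.bh.s A)) →
      RedJ D (.inr (l₁ ++ l₂)) (.inr (l₁ ++ brktWord D A ++ l₂))
  | insert_pt (p : Pt) (A : Bx) :
      D.ver.s (D.bh.s A) = p →
      RedJ D (.inl p) (.inr (brktWord D A))

open Relation

theorem Composable.cons_of_ltgt_eq {GV : PreGroupoid Pt Av} {GH : PreGroupoid Pt Ah}
    {a b : Letter Av Ah} {t : List (Letter Av Ah)} (hab : ltgt GV GH a = ltgt GV GH b)
    (hc : Composable GV GH (b :: t)) : Composable GV GH (a :: t) := by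
  cases t with
  | nil => exact List.isChain_singleton a
  | cons c t =>
    obtain ⟨hbc, hct⟩ := List.isChain_cons_cons.mp hc
    exact List.IsChain.cons_cons (hab.trans hbc) hct

namespace Red

variable (GV : PreGroupoid Pt Av) (GH : PreGroupoid Pt Ah)

theorem eqvGen_cancel_linv (l₁ l₂ : List (Letter Av Ah)) (u : Letter Av Ah)
    (hne : l₁ ++ l₂ ≠ []) :
    EqvGen (Red GV GH) (.inr (l₁ ++ linv GV GH u :: u :: l₂)) (.inr (l₁ ++ l₂)) := by
  cases u with
  | inl g =>
    have hmerge := merge_v (GH := GH) l₁ l₂ _ _ (GV.e_inv g)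
    rw [GV.inv_comp] at hmerge
    exact .trans _ _ _ (.rel _ _ hmerge) (.rel _ _ (remove_id _ _ _ ⟨_, rfl⟩ hne))
  | inr x =>
    have hmerge := merge_h (GV := GV) l₁ l₂ _ _ (GH.e_inv x)
    rw [GH.inv_comp] at hmerge
    exact .trans _ _ _ (.rel _ _ hmerge) (.rel _ _ (remove_id _ _ _ ⟨_, rfl⟩ hne))

theorem eqvGen_ids_cons (p : Pt) (l : List (Letter Av Ah)) (hne : l ≠ []) :
    EqvGen (Red GV GH) (.inr (.inl (GV.id p) :: .inr (GH.id p) :: l)) (.inr l) :=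
  .trans _ _ _ (.rel _ _ (remove_id [] (.inr (GH.id p) :: l) _ ⟨p, rfl⟩ (by simp)))
    (.rel _ _ (remove_id [] l _ ⟨p, rfl⟩ (by simpa using hne)))

theorem eqvGen_ids_pt (p : Pt) :
    EqvGen (Red GV GH) (.inr [.inl (GV.id p), .inr (GH.id p)]) (.inl p) :=
  .trans _ _ _ (.rel _ _ (remove_id [] [.inr (GH.id p)] _ ⟨p, rfl⟩ (by simp)))
    (.rel _ _ (single_id _ p ⟨p, rfl⟩ (GH.s_id p)))

end Red

def DoubleGroupoid.Filling (D : DoubleGroupoid Pt Bx Hh Vv) : Prop :=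
  ∀ (x : Hh) (g : Vv), D.hor.e x = D.ver.s g → ∃ A : Bx, D.bv.s A = x ∧ D.bh.e A = g

namespace RedJ

variable (D : DoubleGroupoid Pt Bx Hh Vv)

theorem eqvGen_of_eqvGen_red {w w' : Pt ⊕ List (Letter Vv Hh)}
    (h : EqvGen (Red D.ver D.hor) w w') : EqvGen (RedJ D) w w' :=
  h.mono fun _ _ => red _ _

/-- Inserting `[A] = x g y⁻¹ h⁻¹` in front of `h y` and cancelling `h⁻¹ h`,
then `y⁻¹ y`, turns `h y` into `x g`. -/
theorem eqvGen_swap (A : Bx) (l₁ l₂ : List (Letter Vv Hh))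
    (hl₁ : ∀ z ∈ l₁.getLast?, ltgt D.ver D.hor z = D.tlv A) :
    EqvGen (RedJ D) (.inr (l₁ ++ .inl (D.lft A) :: .inr (D.bot A) :: l₂))
      (.inr (l₁ ++ .inr (D.top A) :: .inl (D.rgt A) :: l₂)) := by
  have hins := insert l₁ (.inl (D.lft A) :: .inr (D.bot A) :: l₂) A (by simp) hl₁
    (by simp [lsrc, DoubleGroupoid.lft])
  have hcancel_lft := Red.eqvGen_cancel_linv D.ver D.hor
    (l₁ ++ [.inr (D.top A), .inl (D.rgt A), .inr (D.hor.inv (D.bot A))])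
    (.inr (D.bot A) :: l₂) (.inl (D.lft A)) (by simp)
  have hcancel_bot := Red.eqvGen_cancel_linv D.ver D.hor
    (l₁ ++ [.inr (D.top A), .inl (D.rgt A)]) l₂ (.inr (D.bot A)) (by simp)
  simp only [linv, List.append_assoc, List.cons_append, List.nil_append]
    at hcancel_lft hcancel_bot
  refine .trans _ _ _ (.rel _ _ hins) ?_
  refine .trans _ _ _ (eqvGen_of_eqvGen_red D ?_) (eqvGen_of_eqvGen_red D hcancel_bot)
  simpa [brktWord, DoubleGroupoid.lft, DoubleGroupoid.bot, DoubleGroupoid.top,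
    DoubleGroupoid.rgt] using hcancel_lft

variable {D}

/-- Absorbing the letters of `t` one at a time: a horizontal letter merges into `x`, and a
vertical one is first moved left past `x` by a filling box, then merges into `g`. -/
theorem exists_eqvGen_factorization_of_cons (hfill : D.Filling) :
    ∀ (t : List (Letter Vv Hh)) (g : Vv) (x : Hh), D.ver.e g = D.hor.s x →
      Composable D.ver D.hor (.inr x :: t) →
      ∃ (g' : Vv) (x' : Hh), D.ver.e g' = D.hor.s x' ∧
        EqvGen (RedJ D) (.inr (.inl g :: .inr x :: t)) (.inr [.inl g', .inr x'])
  | [], g, x, hgx, _ => ⟨g, x, hgx, .refl _⟩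
  | .inr x'' :: t, g, x, hgx, hc => by
    have hxx'' : D.hor.e x = D.hor.s x'' := (List.isChain_cons_cons.mp hc).1
    have hmerge := red _ _ (Red.merge_h [.inl g] t x x'' hxx'')
    obtain ⟨g', x', hg'x', he⟩ := exists_eqvGen_factorization_of_cons hfill t g
      (D.hor.comp x x'') (by rwa [D.hor.s_comp _ _ hxx''])
      (Composable.cons_of_ltgt_eq (b := .inr x'') (D.hor.e_comp _ _ hxx'') hc.tail)
    exact ⟨g', x', hg'x', .trans _ _ _ (.rel _ _ hmerge) he⟩
  | .inl g'' :: t, g, x, hgx, hc => by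
    obtain ⟨A, rfl, rfl⟩ := hfill x g'' (List.isChain_cons_cons.mp hc).1
    have hgh : D.ver.e g = D.ver.s (D.bh.s A) := by rw [hgx, D.match_tl]
    have hswap := eqvGen_swap D A [.inl g] t (by simpa [ltgt, DoubleGroupoid.tlv] using hgh)
    have hmerge := red _ _ (Red.merge_v [] (.inr (D.bv.e A) :: t) g (D.bh.s A) hgh)
    obtain ⟨g', x', hg'x', he⟩ := exists_eqvGen_factorization_of_cons hfill t
      (D.ver.comp g (D.bh.s A)) (D.bv.e A) (by rw [D.ver.e_comp _ _ hgh, D.match_bl])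
      (Composable.cons_of_ltgt_eq (b := .inl (D.bh.e A)) (D.match_br A) hc.tail)
    exact ⟨g', x', hg'x', .trans _ _ _ hswap.symm (.trans _ _ _ (.rel _ _ hmerge) he)⟩

end RedJ

theorem diagonal_factorization_general (D : DoubleGroupoid Pt Bx Hh Vv)
    (hfill : ∀ (x : Hh) (g : Vv), D.hor.e x = D.ver.s g →
      ∃ A : Bx, D.bv.s A = x ∧ D.bh.e A = g) :
    ∀ w : Pt ⊕ List (Letter Vv Hh),
      (∀ l, w = .inr l → l ≠ [] ∧ Composable D.ver D.hor l) →
      ∃ (g : Vv) (x : Hh), D.ver.e g = D.hor.s x ∧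
        Relation.EqvGen (RedJ D) w (.inr [.inl g, .inr x]) := by
  rintro (p | l) hw
  · exact ⟨D.ver.id p, D.hor.id p, by rw [D.ver.e_id, D.hor.s_id],
      (RedJ.eqvGen_of_eqvGen_red D (Red.eqvGen_ids_pt D.ver D.hor p)).symm⟩
  · obtain ⟨hne, hc⟩ := hw l rfl
    obtain ⟨a, t, rfl⟩ := List.exists_cons_of_ne_nil hne
    set p := lsrc D.ver D.hor a
    have hc' : Composable D.ver D.hor (.inr (D.hor.id p) :: a :: t) :=
      List.IsChain.cons_cons (D.hor.e_id p) hc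
    obtain ⟨g, x, hgx, he⟩ := RedJ.exists_eqvGen_factorization_of_cons hfill (a :: t)
      (D.ver.id p) (D.hor.id p) (by rw [D.ver.e_id, D.hor.s_id]) hc'
    have hids := RedJ.eqvGen_of_eqvGen_red D (Red.eqvGen_ids_cons D.ver D.hor p _ hne)
    exact ⟨g, x, hgx, .trans _ _ _ hids.symm he⟩

/-- Let `B` be a slim double groupoid satisfying the filling condition and
`D(B) = (V * H)/J` its diagonal groupoid, with canonical maps `i : H → D(B)`,
`j : V → D(B)`.  Then `D(B) = j(V) i(H)`: every arrow of `D(B)` — i.e. every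
class of composable paths of `V ⊔ V` modulo reductions and bracket relations —
can be written as `j(g) i(x)` with `g ∈ V`, `x ∈ H` and `b(g) = l(x)`. -/
theorem diagonal_factorization (D : DoubleGroupoid Pt Bx Hh Vv)
    (hslim : ∀ A A' : Bx, D.bv.s A = D.bv.s A' → D.bv.e A = D.bv.e A' →
      D.bh.s A = D.bh.s A' → D.bh.e A = D.bh.e A' → A = A')
    (hfill : ∀ (x : Hh) (g : Vv), D.hor.e x = D.ver.s g →
      ∃ A : Bx, D.bv.s A = x ∧ D.bh.e A = g) :
    ∀ w : Pt ⊕ List (Letter Vv Hh),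
      (∀ l, w = .inr l → l ≠ [] ∧ Composable D.ver D.hor l) →
      ∃ (g : Vv) (x : Hh), D.ver.e g = D.hor.s x ∧
        Relation.EqvGen (RedJ D) w (.inr [.inl g, .inr x]) :=
  diagonal_factorization_general D hfill
end
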